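/- arXiv:2505.07982 — 2 statements merged into one kernel-verified Lean document; each statement's English description precedes it below -/
import Mathlib

section
/- Let x, y ∈ ℝ^c with 𝟙ᵀx = 𝟙ᵀy = 0 and let τ > 0. Then perfect state transfer occurs between x and y under M at time τ (i.e., U_M(τ)·x = γ·y for some γ ∈ ℂ with |γ| = 1) if and only if perfect state transfer occurs between (x,0) and (y,0) under N at time τ. In particular (taking y = x), x is periodic in M at time τ if and only if (x,0) is periodic in N at time τ. -/
open Matrix

/-- The transition matrix `U_R(t) = exp(i·t·R)` of a real square matrix `R`,
as a complex matrix. -/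
noncomputable def U {ι : Type*} [Fintype ι] [DecidableEq ι]
    (R : Matrix ι ι ℝ) (t : ℝ) : Matrix ι ι ℂ :=
  NormedSpace.exp ((Complex.I * (t : ℂ)) • R.map (Complex.ofReal ·))

/-!
Padded with zeros, the vectors of coordinate sum zero form an `N`-invariant subspace on which `N`
acts as `α • 1 + M`: the block `Bᵀ` has constant rows and so kills them, and `M`, being symmetric
with eigenvector `𝟙`, preserves them. Hence `U N t (x, 0) = (U (α • 1 + M) t x, 0)
= e^{iαt} (U M t x, 0)`, and the unimodular phase `e^{iαt}` is absorbed into `γ`.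
-/

open Nat in
open scoped Matrix.Norms.Operator in
theorem Matrix.hasSum_exp_mulVec {𝕂 ι : Type*} [RCLike 𝕂] [Fintype ι] [DecidableEq ι]
    (A : Matrix ι ι 𝕂) (v : ι → 𝕂) :
    HasSum (fun n : ℕ => ((n ! : 𝕂)⁻¹ • A ^ n) *ᵥ v) (NormedSpace.exp A *ᵥ v) :=
  (NormedSpace.exp_series_hasSum_exp' (𝕂 := 𝕂) A).map (mulVec.addMonoidHomLeft v)
    (continuous_id.matrix_mulVec continuous_const)

theorem Matrix.pow_mulVec_map_of_invariant {R ι κ : Type*} [CommSemiring R] [Fintype ι]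
    [Fintype κ] [DecidableEq ι] [DecidableEq κ]
    {A : Matrix ι ι R} {B : Matrix κ κ R} (E : (ι → R) → (κ → R)) {S : Set (ι → R)}
    (hA : ∀ s ∈ S, A *ᵥ s ∈ S) (hB : ∀ s ∈ S, B *ᵥ E s = E (A *ᵥ s)) {v : ι → R}
    (hv : v ∈ S) (n : ℕ) : A ^ n *ᵥ v ∈ S ∧ B ^ n *ᵥ E v = E (A ^ n *ᵥ v) := by
  induction n with
  | zero => simpa using hv
  | succ n ih =>
    rw [pow_succ', pow_succ', ← mulVec_mulVec, ← mulVec_mulVec, ih.2]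
    exact ⟨hA _ ih.1, hB _ ih.1⟩

open Nat in
theorem Matrix.exp_smul_mulVec_map_of_invariant {𝕂 ι κ : Type*} [RCLike 𝕂] [Fintype ι]
    [Fintype κ] [DecidableEq ι] [DecidableEq κ]
    {A : Matrix ι ι 𝕂} {B : Matrix κ κ 𝕂} (E : (ι → 𝕂) →ₗ[𝕂] (κ → 𝕂)) {S : Set (ι → 𝕂)}
    (hA : ∀ s ∈ S, A *ᵥ s ∈ S) (hB : ∀ s ∈ S, B *ᵥ E s = E (A *ᵥ s)) {v : ι → 𝕂}
    (hv : v ∈ S) (t : 𝕂) :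
    NormedSpace.exp (t • B) *ᵥ E v = E (NormedSpace.exp (t • A) *ᵥ v) := by
  have hterm (n : ℕ) : ((n ! : 𝕂)⁻¹ • (t • B) ^ n) *ᵥ E v =
      E (((n ! : 𝕂)⁻¹ • (t • A) ^ n) *ᵥ v) := by
    simp only [smul_pow, smul_smul, smul_mulVec, map_smul,
      (pow_mulVec_map_of_invariant E hA hB hv n).2]
  refine (hasSum_exp_mulVec (t • B) (E v)).unique ?_
  simpa only [Function.comp_def, hterm] using
    (hasSum_exp_mulVec (t • A) v).map E (LinearMap.continuous_of_finiteDimensional E)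

def zeroSumSubmodule (R ι : Type*) [CommSemiring R] [Fintype ι] : Submodule R (ι → R) where
  carrier := {v | ∑ i, v i = 0}
  add_mem' {u v} hu hv := by simp_all [Finset.sum_add_distrib]
  zero_mem' := by simp
  smul_mem' a v hv := by simp_all [← Finset.mul_sum]

section ZeroSum

variable {R ι κ : Type*} [CommSemiring R] [Fintype ι]

theorem mem_zeroSumSubmodule {v : ι → R} : v ∈ zeroSumSubmodule R ι ↔ ∑ i, v i = 0 := Iff.rfl

theorem Matrix.IsSymm.mulVec_mem_zeroSumSubmodule {M : Matrix ι ι R} (hM : M.IsSymm) {μ : R}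
    (hμ : M *ᵥ 1 = μ • 1) {v : ι → R} (hv : v ∈ zeroSumSubmodule R ι) :
    M *ᵥ v ∈ zeroSumSubmodule R ι := by
  rw [mem_zeroSumSubmodule] at hv ⊢
  calc ∑ i, (M *ᵥ v) i = (1 ᵥ* Mᵀ) ⬝ᵥ v := by rw [← one_dotProduct, dotProduct_mulVec, hM]
    _ = μ * ∑ i, v i := by rw [vecMul_transpose, hμ, smul_dotProduct, one_dotProduct, smul_eq_mul]
    _ = 0 := by rw [hv, mul_zero]

theorem Matrix.transpose_mulVec_of_forall_apply_eq {B : Matrix ι κ R} {w : κ → R}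
    (hB : ∀ i j, B i j = w j) (v : ι → R) : Bᵀ *ᵥ v = (∑ i, v i) • w := by
  ext j
  simp only [mulVec, dotProduct, transpose_apply, hB, Pi.smul_apply, smul_eq_mul, Finset.sum_mul]
  exact Finset.sum_congr rfl fun _ _ => mul_comm _ _

theorem Matrix.fromBlocks_mulVec_sumElim_zero [Fintype κ] {A : Matrix ι ι R}
    {B : Matrix ι κ R} {w : κ → R} (hB : ∀ i j, B i j = w j) (D : Matrix κ κ R)
    {v : ι → R} (hv : v ∈ zeroSumSubmodule R ι) :
    fromBlocks A B Bᵀ D *ᵥ Sum.elim v 0 = Sum.elim (A *ᵥ v) 0 := by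
  rw [fromBlocks_mulVec, Sum.elim_comp_inl, Sum.elim_comp_inr,
    transpose_mulVec_of_forall_apply_eq hB, mem_zeroSumSubmodule.mp hv]
  simp

end ZeroSum

theorem U_smul_one_add {ι : Type*} [Fintype ι] [DecidableEq ι] (α : ℝ) (M : Matrix ι ι ℝ)
    (t : ℝ) : U (α • 1 + M) t = Complex.exp ((α * t : ℝ) * Complex.I) • U M t := by
  have hsplit : (Complex.I * t) • (α • 1 + M).map (Complex.ofReal ·) =
      ((α * t : ℝ) * Complex.I) • 1 + (Complex.I * t) • M.map (Complex.ofReal ·) := by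
    ext i j
    by_cases h : i = j <;> simp [h]
    ring
  rw [U, U, hsplit, exp_add_of_commute _ _ ((Commute.one_left _).smul_left _),
    smul_one_eq_diagonal, exp_diagonal, Pi.exp_def, ← smul_one_eq_diagonal, smul_mul_assoc,
    one_mul, Complex.exp_eq_exp_ℂ]

theorem U_fromBlocks_mulVec_sumElim_zero {ι κ : Type*} [Fintype ι] [DecidableEq ι] [Fintype κ]
    [DecidableEq κ] {M : Matrix ι ι ℝ} (hM : M.IsSymm) {μ : ℝ} (hμ : M *ᵥ 1 = μ • 1) (α : ℝ)
    {B : Matrix ι κ ℝ} {w : κ → ℝ} (hB : ∀ i j, B i j = w j) (D : Matrix κ κ ℝ)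
    {x : ι → ℝ} (hx : ∑ i, x i = 0) (t : ℝ) :
    U (fromBlocks (α • 1 + M) B Bᵀ D) t *ᵥ Sum.elim (fun i => (x i : ℂ)) 0 =
      Complex.exp ((α * t : ℝ) * Complex.I) • Sum.elim (U M t *ᵥ fun i => (x i : ℂ)) 0 := by
  set S := zeroSumSubmodule ℂ ι
  have hμℂ : M.map (Complex.ofReal ·) *ᵥ 1 = (μ : ℂ) • 1 := by
    ext i
    have := congrFun hμ i
    simp only [mulVec, dotProduct, map_apply, Pi.one_apply, mul_one, Pi.smul_apply,
      smul_eq_mul] at this ⊢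
    exact_mod_cast this
  have hA : ∀ s ∈ S, (α • 1 + M).map (Complex.ofReal ·) *ᵥ s ∈ S := by
    intro s hs
    have : (α • 1 + M).map (Complex.ofReal ·) = (α : ℂ) • 1 + M.map (Complex.ofReal ·) := by
      ext i j
      by_cases h : i = j <;> simp [h]
    rw [this, add_mulVec, smul_mulVec, one_mulVec]
    exact S.add_mem (S.smul_mem _ hs) ((hM.map _).mulVec_mem_zeroSumSubmodule hμℂ hs)
  have hN : ∀ s ∈ S, (fromBlocks (α • 1 + M) B Bᵀ D).map (Complex.ofReal ·) *ᵥ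
      Sum.elimZeroRight s = Sum.elimZeroRight ((α • 1 + M).map (Complex.ofReal ·) *ᵥ s) := by
    intro s hs
    rw [fromBlocks_map, transpose_map]
    exact fromBlocks_mulVec_sumElim_zero (w := fun j => (w j : ℂ)) (by simp [hB]) _ hs
  have hx : (fun i => (x i : ℂ)) ∈ S := by
    rw [mem_zeroSumSubmodule]
    exact_mod_cast hx
  calc _ = Sum.elimZeroRight (U (α • 1 + M) t *ᵥ fun i => (x i : ℂ)) :=
        exp_smul_mulVec_map_of_invariant Sum.elimZeroRight hA hN hx (Complex.I * t)
    _ = _ := by rw [U_smul_one_add, smul_mulVec, map_smul]; rfl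

theorem exists_norm_one_smul_iff_of_eq_smul {𝕜 V W : Type*} [NormedField 𝕜] [AddCommGroup V]
    [Module 𝕜 V] [AddCommGroup W] [Module 𝕜 W] {E : V →ₗ[𝕜] W} (hE : Function.Injective E)
    {g : 𝕜} (hg : ‖g‖ = 1) {u v : V} {u' : W} (hu' : u' = g • E u) :
    (∃ γ : 𝕜, ‖γ‖ = 1 ∧ u = γ • v) ↔ ∃ γ : 𝕜, ‖γ‖ = 1 ∧ u' = γ • E v := by
  have hg₀ : g ≠ 0 := norm_ne_zero_iff.mp (hg ▸ one_ne_zero)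
  constructor
  · rintro ⟨γ, hγ, rfl⟩
    exact ⟨g * γ, by rw [norm_mul, hg, hγ, one_mul], by rw [hu', map_smul, smul_smul]⟩
  · rintro ⟨γ, hγ, h⟩
    refine ⟨g⁻¹ * γ, by rw [norm_mul, norm_inv, hg, hγ, inv_one, one_mul], hE ?_⟩
    rw [map_smul, ← smul_smul, ← h, hu', inv_smul_smul₀ hg₀]

theorem stmt2_general (c m : ℕ)
    (M : Matrix (Fin c) (Fin c) ℝ) (hM : M.IsSymm)
    (μ α : ℝ) (hμ : M *ᵥ (fun _ => (1 : ℝ)) = μ • fun _ => (1 : ℝ))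
    (w : Fin m → ℝ)
    (B : Matrix (Fin c) (Fin m) ℝ) (hB : ∀ i j, B i j = w j)
    (D : Matrix (Fin m) (Fin m) ℝ)
    (N : Matrix (Fin c ⊕ Fin m) (Fin c ⊕ Fin m) ℝ)
    (hN : N = Matrix.fromBlocks (α • (1 : Matrix (Fin c) (Fin c) ℝ) + M) B Bᵀ D)
    (x y : Fin c → ℝ) (hx : ∑ i, x i = 0)
    (τ : ℝ) :
    (∃ γ : ℂ, ‖γ‖ = 1 ∧
        U M τ *ᵥ (fun i => (x i : ℂ)) = γ • fun i => (y i : ℂ)) ↔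
      (∃ γ : ℂ, ‖γ‖ = 1 ∧
        U N τ *ᵥ Sum.elim (fun i => (x i : ℂ)) 0 =
          γ • Sum.elim (fun i => (y i : ℂ)) 0) := by
  subst hN
  have hE : Function.Injective (Sum.elimZeroRight : (Fin c → ℂ) →ₗ[ℂ] (Fin c ⊕ Fin m → ℂ)) :=
    fun u v h => funext fun i => congrFun h (Sum.inl i)
  exact exists_norm_one_smul_iff_of_eq_smul hE (Complex.norm_exp_ofReal_mul_I _)
    (U_fromBlocks_mulVec_sumElim_zero hM hμ α hB D hx τ)

/-- For `x, y ∈ ℝ^c` with `𝟙ᵀx = 𝟙ᵀy = 0` and `τ > 0`, perfect state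
transfer occurs between `x` and `y` under `M` at time `τ` if and only if it occurs
between `(x,0)` and `(y,0)` under `N` at time `τ`. (In particular, taking `y = x`,
`x` is periodic in `M` at `τ` iff `(x,0)` is periodic in `N` at `τ`.) -/
theorem stmt2 (c m : ℕ) (hc : 1 ≤ c)
    (M : Matrix (Fin c) (Fin c) ℝ) (hM : M.IsSymm)
    (μ α : ℝ) (hμ : M *ᵥ (fun _ => (1 : ℝ)) = μ • fun _ => (1 : ℝ))
    (w : Fin m → ℝ)
    (B : Matrix (Fin c) (Fin m) ℝ) (hB : ∀ i j, B i j = w j)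
    (D : Matrix (Fin m) (Fin m) ℝ) (hD : D.IsSymm)
    (N : Matrix (Fin c ⊕ Fin m) (Fin c ⊕ Fin m) ℝ)
    (hN : N = Matrix.fromBlocks (α • (1 : Matrix (Fin c) (Fin c) ℝ) + M) B Bᵀ D)
    (x y : Fin c → ℝ) (hx : ∑ i, x i = 0) (hy : ∑ i, y i = 0)
    (τ : ℝ) (hτ : 0 < τ) :
    (∃ γ : ℂ, ‖γ‖ = 1 ∧
        U M τ *ᵥ (fun i => (x i : ℂ)) = γ • fun i => (y i : ℂ)) ↔
      (∃ γ : ℂ, ‖γ‖ = 1 ∧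
        U N τ *ᵥ Sum.elim (fun i => (x i : ℂ)) 0 =
          γ • Sum.elim (fun i => (y i : ℂ)) 0) :=
  stmt2_general c m M hM μ α hμ w B hB D N hN x y hx τ
end

section
/- For every integer k ≥ 5 and every N ∈ ℕ, there exist n > N and a connected simple (unweighted) graph G on n vertices which is not regular, has maximum degree k, and admits pair state transfer at time π/2 relative to the adjacency, Laplacian, and signless Laplacian matrices between the same pair of states: there exist vertices a, b, c, d with a ≠ b, c ≠ d, and {a,b} ≠ {c,d}, such that for each M ∈ { A(G), L(G), Q(G) } there is γ_M ∈ ℂ with |γ_M| = 1 satisfying exp(i·(π/2)·M) · (e_a − e_b) = γ_M · (e_c − e_d). -/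
/-!
Let `a - b - c - d - a` be a 4-cycle whose opposite vertices are twins and such that every other
vertex is adjacent to all four of its vertices or to none. Then `(e_a - e_b) + (e_d - e_c)` and
`(e_a - e_b) - (e_d - e_c)` are eigenvectors of `A` with eigenvalues `0` and `-2`; as the four
vertices share a degree `δ`, they are also eigenvectors of `L = Δ - A` and `Q = Δ + A`, with
eigenvalues `δ, δ + 2` and `δ, δ - 2`. Eigenvalues differing by `2` acquire opposite phases at
time `π/2`, so `U(π/2)` maps `e_a - e_b`, half the sum of the two eigenvectors, to a unimodular
multiple of `e_d - e_c`, half their difference. The complete tripartite graph `K_{2,2,k-2}` with a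
long path attached to its large part contains such a square, is connected and not regular, and
has maximum degree `k`.
-/

open Matrix

attribute [local instance] Classical.propDecidable

/-- The standard basis vector `e_v` as a complex vector. -/
def ket {ι : Type*} [DecidableEq ι] (v : ι) : ι → ℂ :=
  fun i => if i = v then 1 else 0

section Exponential

variable {ι : Type*} [Fintype ι] [DecidableEq ι]

theorem Matrix.exp_mulVec_of_mulVec_eq_smul {B : Matrix ι ι ℂ} {v : ι → ℂ} {μ : ℂ}
    (h : B *ᵥ v = μ • v) : NormedSpace.exp B *ᵥ v = NormedSpace.exp μ • v := by
  -- matrices carry no global norm; any submultiplicative one makes the exponential series converge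
  let _ : SeminormedRing (Matrix ι ι ℂ) := Matrix.linftyOpSemiNormedRing
  let _ : NormedRing (Matrix ι ι ℂ) := Matrix.linftyOpNormedRing
  let _ : NormedAlgebra ℂ (Matrix ι ι ℂ) := Matrix.linftyOpNormedAlgebra
  have hpow (p : ℕ) : B ^ p *ᵥ v = μ ^ p • v := by
    induction p with
    | zero => simp
    | succ p ih => rw [pow_succ', ← mulVec_mulVec, ih, mulVec_smul, h, smul_smul, pow_succ]
  have hB := (NormedSpace.exp_series_hasSum_exp' (𝕂 := ℂ) B).map
    (mulVec.addMonoidHomLeft v) (continuous_id.matrix_mulVec continuous_const)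
  have hμ := (NormedSpace.exp_series_hasSum_exp' (𝕂 := ℂ) μ).smul_const v
  refine hB.unique ?_
  convert hμ using 2 with p
  simp [mulVec.addMonoidHomLeft, smul_mulVec, hpow, smul_smul]

theorem U_mulVec_of_mulVec_eq_smul {R : Matrix ι ι ℝ} {v : ι → ℂ} {μ : ℝ}
    (h : R.map (Complex.ofReal ·) *ᵥ v = (μ : ℂ) • v) (t : ℝ) :
    U R t *ᵥ v = Complex.exp (Complex.I * t * μ) • v := by
  have hB : ((Complex.I * t) • R.map (Complex.ofReal ·)) *ᵥ v = (Complex.I * t * μ) • v := by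
    rw [smul_mulVec, h, smul_smul]
  rw [U, exp_mulVec_of_mulVec_eq_smul hB, Complex.exp_eq_exp_ℂ]

open Complex in
theorem Complex.exp_I_mul_pi_div_two_mul_eq_neg {ν μ : ℝ} (h : |ν - μ| = 2) :
    exp (I * (Real.pi / 2 : ℝ) * μ) = -exp (I * (Real.pi / 2 : ℝ) * ν) := by
  obtain h | h := (abs_eq zero_le_two).mp h
  · have hμ : I * (Real.pi / 2 : ℝ) * μ = I * (Real.pi / 2 : ℝ) * ν - Real.pi * I := by
      rw [show (μ : ℂ) = ν - 2 by exact_mod_cast (by linarith : μ = ν - 2)]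
      push_cast
      ring
    rw [hμ, exp_sub, exp_pi_mul_I, div_neg, div_one]
  · have hμ : I * (Real.pi / 2 : ℝ) * μ = I * (Real.pi / 2 : ℝ) * ν + Real.pi * I := by
      rw [show (μ : ℂ) = ν + 2 by exact_mod_cast (by linarith : μ = ν + 2)]
      push_cast
      ring
    rw [hμ, exp_add, exp_pi_mul_I, mul_neg_one]

theorem exists_U_pi_div_two_mulVec_eq_smul {R : Matrix ι ι ℝ} {u w : ι → ℂ} {ν μ : ℝ}
    (hadd : R.map (Complex.ofReal ·) *ᵥ (u + w) = (ν : ℂ) • (u + w))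
    (hsub : R.map (Complex.ofReal ·) *ᵥ (u - w) = (μ : ℂ) • (u - w)) (hgap : |ν - μ| = 2) :
    ∃ γ : ℂ, ‖γ‖ = 1 ∧ U R (Real.pi / 2) *ᵥ u = γ • w := by
  refine ⟨Complex.exp (Complex.I * (Real.pi / 2 : ℝ) * ν), by simp [Complex.norm_exp], ?_⟩
  have hu : u = (2⁻¹ : ℂ) • ((u + w) + (u - w)) := by module
  rw [hu, mulVec_smul, mulVec_add, U_mulVec_of_mulVec_eq_smul hadd,
    U_mulVec_of_mulVec_eq_smul hsub, Complex.exp_I_mul_pi_div_two_mul_eq_neg hgap]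
  module

end Exponential

def pairState {V α : Type*} [DecidableEq V] [AddGroupWithOne α] (a b : V) : V → α :=
  Pi.single a 1 - Pi.single b 1

theorem ket_sub_ket {V : Type*} [DecidableEq V] (a b : V) : ket a - ket b = pairState a b := by
  ext i
  simp [ket, pairState, Pi.single_apply]

namespace SimpleGraph

theorem connected_of_forall_exists_adj_lt {V : Type*} [Preorder V] [WellFoundedLT V]
    {G : SimpleGraph V} (r : V) (h : ∀ v, v ≠ r → ∃ w < v, G.Adj v w) : G.Connected := by
  refine (connected_iff_exists_forall_reachable G).mpr ⟨r, fun v => ?_⟩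
  induction v using WellFoundedLT.induction with
  | _ v ih =>
    by_cases hv : v = r
    · exact hv ▸ Reachable.refl v
    · obtain ⟨w, hwv, hadj⟩ := h v hv
      exact (ih w hwv).trans hadj.symm.reachable

section Fin

variable {n : ℕ} (G : SimpleGraph (Fin n)) [DecidableRel G.Adj] {v : Fin n}

theorem degree_le_card_of_forall_adj (S : Finset ℕ) (hS : ∀ w, G.Adj v w → w.val ∈ S) :
    G.degree v ≤ S.card := by
  rw [← card_neighborFinset_eq_degree, ← Finset.card_map Fin.valEmbedding]
  refine Finset.card_le_card fun m hm => ?_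
  obtain ⟨w, hw, rfl⟩ := Finset.mem_map.mp hm
  exact hS w ((mem_neighborFinset G v w).mp hw)

theorem degree_eq_card_of_forall_adj_iff (S : Finset ℕ)
    (hS : ∀ m, m ∈ S ↔ ∃ h : m < n, G.Adj v ⟨m, h⟩) : G.degree v = S.card := by
  rw [← card_neighborFinset_eq_degree, ← Finset.card_map Fin.valEmbedding]
  congr 1
  ext m
  simp only [Finset.mem_map, mem_neighborFinset, Fin.valEmbedding_apply, hS]
  exact ⟨fun ⟨w, hw, hwm⟩ => hwm ▸ ⟨w.isLt, hw⟩, fun ⟨_, hadj⟩ => ⟨_, hadj, rfl⟩⟩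

end Fin

variable {V α β : Type*} (G : SimpleGraph V)

/-- `a b c d` is a 4-cycle `a - b - c - d - a` whose opposite vertices are twins and every vertex
outside of which is adjacent to all four of its vertices or to none. -/
structure IsSquareModule (a b c d : V) : Prop where
  adj : G.Adj a b
  ne_ac : a ≠ c
  ne_bd : b ≠ d
  adj_iff_adj_ac : ∀ v, G.Adj v a ↔ G.Adj v c
  adj_iff_adj_bd : ∀ v, G.Adj v b ↔ G.Adj v d
  adj_iff_adj_ab : ∀ v, v ≠ a → v ≠ b → v ≠ c → v ≠ d → (G.Adj v a ↔ G.Adj v b)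

namespace IsSquareModule

variable {G} {a b c d : V} (h : G.IsSquareModule a b c d)
include h

theorem adj_da : G.Adj d a := ((h.adj_iff_adj_bd a).mp h.adj).symm

theorem reverse : G.IsSquareModule d c b a where
  adj := ((h.adj_iff_adj_bd c).mp ((h.adj_iff_adj_ac b).mp h.adj.symm).symm).symm
  ne_ac := h.ne_bd.symm
  ne_bd := h.ne_ac.symm
  adj_iff_adj_ac v := (h.adj_iff_adj_bd v).symm
  adj_iff_adj_bd v := (h.adj_iff_adj_ac v).symm
  adj_iff_adj_ab v hd hc hb ha := (h.adj_iff_adj_bd v).symm.trans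
    ((h.adj_iff_adj_ab v ha hb hc hd).symm.trans (h.adj_iff_adj_ac v))

theorem pair_ne : ({a, b} : Set V) ≠ {d, c} := fun hs => by
  have ha : a ∈ ({d, c} : Set V) := hs ▸ Set.mem_insert a _
  rcases ha with had | hac
  · exact h.adj_da.ne had.symm
  · exact h.ne_ac hac

end IsSquareModule

variable [DecidableRel G.Adj]

theorem adjMatrix_map [NonAssocSemiring α] [NonAssocSemiring β] (f : α →+* β) :
    (G.adjMatrix α).map f = G.adjMatrix β := by
  ext i j
  simp [adjMatrix_apply, apply_ite f]

variable [Fintype V]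

theorem degree_eq_of_forall_adj_iff {a b : V} (h : ∀ v, G.Adj v a ↔ G.Adj v b) :
    G.degree a = G.degree b := by
  rw [← card_neighborFinset_eq_degree, ← card_neighborFinset_eq_degree]
  congr 1
  ext v
  simp [G.adj_comm _ v, h]

variable [DecidableEq V]

theorem degMatrix_map [NonAssocSemiring α] [NonAssocSemiring β] (f : α →+* β) :
    (G.degMatrix α).map f = G.degMatrix β := by
  simp [degMatrix, diagonal_map]

theorem lapMatrix_map [NonAssocRing α] [NonAssocRing β] (f : α →+* β) :
    (G.lapMatrix α).map f = G.lapMatrix β := by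
  simp [lapMatrix, Matrix.map_sub, adjMatrix_map, degMatrix_map]

theorem degMatrix_mulVec_pairState [CommRing α] {a b : V} (h : G.degree a = G.degree b) :
    G.degMatrix α *ᵥ pairState a b = (G.degree a : α) • pairState a b := by
  ext i
  rw [degMatrix, mulVec_diagonal, Pi.smul_apply, smul_eq_mul]
  by_cases hi : i = a ∨ i = b
  · rcases hi with rfl | rfl <;> simp [h]
  · simp [pairState, not_or.mp hi]

namespace IsSquareModule

variable {G} {a b c d : V} (h : G.IsSquareModule a b c d)
include h

theorem adjMatrix_mulVec_pairState [CommRing α] :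
    G.adjMatrix α *ᵥ pairState a b = pairState d c - pairState a b := by
  have hbc : G.Adj b c := (h.adj_iff_adj_ac b).mp h.adj.symm
  have hcd : c ≠ d := h.reverse.adj.ne.symm
  have hca : ¬ G.Adj c a := fun hca => G.irrefl ((h.adj_iff_adj_ac c).mp hca)
  have hdb : ¬ G.Adj d b := fun hdb => G.irrefl ((h.adj_iff_adj_bd d).mp hdb)
  ext i
  by_cases hi : i = a ∨ i = b ∨ i = c ∨ i = d
  · have hab := h.adj.ne
    have hda := h.adj_da.ne
    have hac := h.ne_ac
    have hbd := h.ne_bd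
    rcases hi with rfl | rfl | rfl | rfl <;>
      simp [pairState, Pi.single_apply, h.adj, h.adj.symm, hbc.symm, h.adj_da, hca, hdb,
        hab, hbc.ne, hcd, hda, hac, hbd, hab.symm, hbc.ne.symm, hcd.symm, hda.symm,
        hac.symm, hbd.symm]
  · simp only [not_or] at hi
    simp [pairState, Pi.single_apply, hi, h.adj_iff_adj_ab i hi.1 hi.2.1 hi.2.2.1 hi.2.2.2]

theorem degree_eq : G.degree a = G.degree b := by
  -- sum the coordinates of `A (e_a - e_b) = (e_d - e_c) - (e_a - e_b)`
  have hsum := congrArg (fun x : V → ℤ => ∑ i, x i) (h.adjMatrix_mulVec_pairState (α := ℤ))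
  simp only [pairState, adjMatrix_mulVec_apply, Pi.sub_apply, Finset.sum_sub_distrib,
    Finset.sum_pi_single', mem_neighborFinset, G.adj_comm, Finset.sum_boole, Finset.mem_univ,
    ↓reduceIte, sub_self] at hsum
  rw [← G.card_neighborFinset_eq_degree, ← G.card_neighborFinset_eq_degree,
    neighborFinset_eq_filter, neighborFinset_eq_filter]
  omega

theorem degree_d_eq_degree_a : G.degree d = G.degree a :=
  (G.degree_eq_of_forall_adj_iff h.adj_iff_adj_bd).symm.trans h.degree_eq.symm

theorem adjMatrix_mulVec_add [CommRing α] :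
    G.adjMatrix α *ᵥ (pairState a b + pairState d c) = 0 := by
  rw [mulVec_add, h.adjMatrix_mulVec_pairState, h.reverse.adjMatrix_mulVec_pairState]
  abel

theorem adjMatrix_mulVec_sub [CommRing α] :
    G.adjMatrix α *ᵥ (pairState a b - pairState d c)
      = (-2 : α) • (pairState a b - pairState d c) := by
  rw [mulVec_sub, h.adjMatrix_mulVec_pairState, h.reverse.adjMatrix_mulVec_pairState]
  module

theorem degMatrix_mulVec_add [CommRing α] :
    G.degMatrix α *ᵥ (pairState a b + pairState d c)
      = (G.degree a : α) • (pairState a b + pairState d c) := by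
  rw [mulVec_add, G.degMatrix_mulVec_pairState h.degree_eq,
    G.degMatrix_mulVec_pairState h.reverse.degree_eq, h.degree_d_eq_degree_a, smul_add]

theorem degMatrix_mulVec_sub [CommRing α] :
    G.degMatrix α *ᵥ (pairState a b - pairState d c)
      = (G.degree a : α) • (pairState a b - pairState d c) := by
  rw [mulVec_sub, G.degMatrix_mulVec_pairState h.degree_eq,
    G.degMatrix_mulVec_pairState h.reverse.degree_eq, h.degree_d_eq_degree_a, smul_sub]

theorem exists_U_pi_div_two_mulVec_eq :
    ∀ M ∈ ({G.adjMatrix ℝ, G.lapMatrix ℝ, G.degMatrix ℝ + G.adjMatrix ℝ} : Set (Matrix V V ℝ)),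
      ∃ γ : ℂ, ‖γ‖ = 1 ∧ U M (Real.pi / 2) *ᵥ (ket a - ket b) = γ • (ket d - ket c) := by
  have hA : (G.adjMatrix ℝ).map (Complex.ofReal ·) = G.adjMatrix ℂ :=
    G.adjMatrix_map Complex.ofRealHom
  have hL : (G.lapMatrix ℝ).map (Complex.ofReal ·) = G.lapMatrix ℂ :=
    G.lapMatrix_map Complex.ofRealHom
  have hQ : (G.degMatrix ℝ + G.adjMatrix ℝ).map (Complex.ofReal ·)
      = G.degMatrix ℂ + G.adjMatrix ℂ :=
    (Matrix.map_add _ Complex.ofReal_add _ _).trans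
      (congrArg₂ (· + ·) (G.degMatrix_map Complex.ofRealHom) hA)
  rw [ket_sub_ket, ket_sub_ket]
  rintro M (rfl | rfl | rfl)
  · refine exists_U_pi_div_two_mulVec_eq_smul (ν := 0) (μ := -2) ?_ ?_ (by norm_num)
    · rw [hA, h.adjMatrix_mulVec_add]
      simp
    · rw [hA, h.adjMatrix_mulVec_sub]
      norm_num
  · refine exists_U_pi_div_two_mulVec_eq_smul (ν := G.degree a) (μ := G.degree a + 2) ?_ ?_
      (by norm_num)
    · rw [hL, lapMatrix, sub_mulVec, h.degMatrix_mulVec_add, h.adjMatrix_mulVec_add]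
      simp
    · rw [hL, lapMatrix, sub_mulVec, h.degMatrix_mulVec_sub, h.adjMatrix_mulVec_sub]
      push_cast
      module
  · refine exists_U_pi_div_two_mulVec_eq_smul (ν := G.degree a) (μ := G.degree a - 2) ?_ ?_
      (by norm_num)
    · rw [hQ, add_mulVec, h.degMatrix_mulVec_add, h.adjMatrix_mulVec_add]
      simp
    · rw [hQ, add_mulVec, h.degMatrix_mulVec_sub, h.adjMatrix_mulVec_sub]
      push_cast
      module

end IsSquareModule

end SimpleGraph

/-- The complete tripartite graph `K_{2,2,k-2}` on `0, …, k+1`, with parts `{0, 2}`, `{1, 3}` and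
`{4, …, k+1}`, together with the path `k+1, k+2, …, n-1`. -/
def tripartiteWithTail (k n : ℕ) : SimpleGraph (Fin n) where
  Adj u v := (u.val < 4 ∧ v.val < 4 ∧ u.val % 2 ≠ v.val % 2) ∨
    (u.val < 4 ∧ 4 ≤ v.val ∧ v.val < k + 2) ∨ (v.val < 4 ∧ 4 ≤ u.val ∧ u.val < k + 2) ∨
    (k + 1 ≤ u.val ∧ u.val + 1 = v.val) ∨ (k + 1 ≤ v.val ∧ v.val + 1 = u.val)
  symm := ⟨fun _ _ h => by omega⟩
  loopless := ⟨fun _ h => by omega⟩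

namespace tripartiteWithTail

variable {k n : ℕ}

theorem adj_iff {u v : Fin n} : (tripartiteWithTail k n).Adj u v ↔
    ((u.val < 4 ∧ v.val < 4 ∧ u.val % 2 ≠ v.val % 2) ∨
    (u.val < 4 ∧ 4 ≤ v.val ∧ v.val < k + 2) ∨ (v.val < 4 ∧ 4 ≤ u.val ∧ u.val < k + 2) ∨
    (k + 1 ≤ u.val ∧ u.val + 1 = v.val) ∨ (k + 1 ≤ v.val ∧ v.val + 1 = u.val)) := Iff.rfl

theorem connected (hn : 0 < n) : (tripartiteWithTail k n).Connected := by
  refine SimpleGraph.connected_of_forall_exists_adj_lt ⟨0, hn⟩ fun v hv0 => ?_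
  have hv : v.val ≠ 0 := Fin.val_ne_iff.mpr hv0
  by_cases hpred : v.val = 2 ∨ k + 2 ≤ v.val
  · exact ⟨⟨v - 1, by omega⟩, Fin.mk_lt_of_lt_val (by omega), adj_iff.mpr (by dsimp only; omega)⟩
  · exact ⟨⟨0, hn⟩, Fin.mk_lt_of_lt_val (by omega), adj_iff.mpr (by dsimp only; omega)⟩

theorem isSquareModule (hk : 3 ≤ k) (hn : 4 ≤ n) :
    (tripartiteWithTail k n).IsSquareModule ⟨0, by omega⟩ ⟨1, by omega⟩ ⟨2, by omega⟩
      ⟨3, by omega⟩ where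
  adj := adj_iff.mpr (by simp)
  ne_ac := by simp
  ne_bd := by simp
  adj_iff_adj_ac v := by simp only [adj_iff]; omega
  adj_iff_adj_bd v := by simp only [adj_iff]; omega
  adj_iff_adj_ab v h0 h1 h2 h3 := by
    simp only [adj_iff, ne_eq, Fin.ext_iff] at *
    omega

theorem degree_of_lt_four (hk : 3 ≤ k) (hn : k + 2 ≤ n) {v : Fin n} (hv : v.val < 4) :
    (tripartiteWithTail k n).degree v = k := by
  rw [SimpleGraph.degree_eq_card_of_forall_adj_iff _
    (insert ((v.val + 1) % 2) (insert ((v.val + 1) % 2 + 2) (Finset.Ico 4 (k + 2))))]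
  · rw [Finset.card_insert_of_notMem (by simp only [Finset.mem_insert, Finset.mem_Ico]; omega),
      Finset.card_insert_of_notMem (by simp only [Finset.mem_Ico]; omega), Nat.card_Ico]
    omega
  · intro m
    simp only [Finset.mem_insert, Finset.mem_Ico, adj_iff]
    exact ⟨fun hm => ⟨by omega, by omega⟩, fun ⟨_, hm⟩ => by omega⟩

theorem degree_le_two (hk : 2 ≤ k) {v : Fin n} (hv : k + 2 ≤ v.val) :
    (tripartiteWithTail k n).degree v ≤ 2 := by
  refine ((tripartiteWithTail k n).degree_le_card_of_forall_adj {v.val - 1, v.val + 1}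
    fun w hw => ?_).trans Finset.card_le_two
  rw [adj_iff] at hw
  simp only [Finset.mem_insert, Finset.mem_singleton]
  omega

theorem degree_le (hk : 5 ≤ k) (hn : k + 2 ≤ n) (v : Fin n) :
    (tripartiteWithTail k n).degree v ≤ k := by
  by_cases hv : v.val < 4
  · exact (degree_of_lt_four (by omega) hn hv).le
  by_cases hv' : v.val < k + 2
  · refine ((tripartiteWithTail k n).degree_le_card_of_forall_adj
      (insert (v.val + 1) (Finset.range 4)) fun w hw => ?_).trans ?_
    · rw [adj_iff] at hw
      simp only [Finset.mem_insert, Finset.mem_range]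
      omega
    · exact (Finset.card_insert_le _ _).trans (by rw [Finset.card_range]; omega)
  · exact (degree_le_two (by omega) (by omega)).trans (by omega)

theorem maxDegree_eq (hk : 5 ≤ k) (hn : k + 2 ≤ n) : (tripartiteWithTail k n).maxDegree = k :=
  le_antisymm ((tripartiteWithTail k n).maxDegree_le_of_forall_degree_le k (degree_le hk hn))
    ((degree_of_lt_four (n := n) (v := ⟨0, by omega⟩) (by omega) hn (by simp)).symm.le.trans
      ((tripartiteWithTail k n).degree_le_maxDegree _))

theorem not_exists_isRegularOfDegree (hk : 3 ≤ k) (hn : k + 3 ≤ n) :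
    ¬ ∃ d, (tripartiteWithTail k n).IsRegularOfDegree d := fun ⟨_, hreg⟩ => by
  have hcycle := degree_of_lt_four (n := n) (v := ⟨0, by omega⟩) hk (by omega) (by simp)
  have htail := degree_le_two (n := n) (v := ⟨k + 2, by omega⟩) (by omega) le_rfl
  rw [hreg] at hcycle htail
  omega

end tripartiteWithTail

/-- For every `k ≥ 5` there are infinitely many (i.e., arbitrarily
large) connected non-regular simple graphs with maximum degree `k` admitting pair
state transfer at time `π/2` relative to each of `A`, `L`, and `Q` between the same
pair of states. -/
theorem stmt18 :
    ∀ k : ℕ, 5 ≤ k → ∀ N : ℕ, ∃ n : ℕ, N < n ∧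
      ∃ G : SimpleGraph (Fin n),
        G.Connected ∧
        (¬ ∃ d : ℕ, G.IsRegularOfDegree d) ∧
        G.maxDegree = k ∧
        ∃ a b c d : Fin n, a ≠ b ∧ c ≠ d ∧ ({a, b} : Set (Fin n)) ≠ {c, d} ∧
          ∀ M ∈ ({G.adjMatrix ℝ, G.lapMatrix ℝ, G.degMatrix ℝ + G.adjMatrix ℝ} :
              Set (Matrix (Fin n) (Fin n) ℝ)),
            ∃ γ : ℂ, ‖γ‖ = 1 ∧
              U M (Real.pi / 2) *ᵥ (ket a - ket b) = γ • (ket c - ket d) := by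
  intro k hk N
  have hsq := tripartiteWithTail.isSquareModule (k := k) (n := N + k + 3) (by omega) (by omega)
  exact ⟨N + k + 3, by omega, tripartiteWithTail k (N + k + 3),
    tripartiteWithTail.connected (by omega),
    tripartiteWithTail.not_exists_isRegularOfDegree (by omega) (by omega),
    tripartiteWithTail.maxDegree_eq hk (by omega), _, _, _, _, hsq.adj.ne,
    hsq.reverse.adj.ne, hsq.pair_ne, hsq.exists_U_pi_div_two_mulVec_eq⟩
end
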